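/- Let α∈ℝ, α≠0, let f:ℝ→ℝ be smooth, and let V(q₁,q₂)=q₁^{4/α} f(q₂/q₁) on the open set {q₁>0}⊂ℝ⁴. Then the Hamiltonian flow preserves the bivector P̃ whose entries are P̃¹²=α(p₁q₂−p₂q₁), P̃¹³=p₁²−p₂²−α q₂ ∂V/∂q₂+2V, P̃¹⁴=2p₁p₂+α q₁ ∂V/∂q₂, P̃²³=2p₁p₂+α q₂ ∂V/∂q₁, P̃²⁴=−P̃¹³, P̃³⁴=2p₁ ∂V/∂q₂ − 2p₂ ∂V/∂q₁: the Lie derivative of P̃ along the Hamiltonian vector field X vanishes identically on {q₁>0}. -/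

import Mathlib

open Real

noncomputable section

/-- Partial derivative of `F` in the `k`-th coordinate direction at `x`. -/
def pd (F : (Fin 4 → ℝ) → ℝ) (k : Fin 4) (x : Fin 4 → ℝ) : ℝ :=
  fderiv ℝ F x (Pi.single k 1)

/-- The canonical Poisson bivector on ℝ⁴. -/
def Pcan : Matrix (Fin 4) (Fin 4) ℝ :=
  !![0, 0, 1, 0; 0, 0, 0, 1; -1, 0, 0, 0; 0, -1, 0, 0]

/-- Lie derivative of a bivector field `T` along a vector field `Xf`:
`(L_X T)^{ij} = Σ_k ( X^k ∂T^{ij}/∂x^k − T^{kj} ∂X^i/∂x^k − T^{ik} ∂X^j/∂x^k )`. -/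
def lieDerivBiv (Xf : (Fin 4 → ℝ) → Fin 4 → ℝ)
    (T : (Fin 4 → ℝ) → Matrix (Fin 4) (Fin 4) ℝ)
    (i j : Fin 4) (x : Fin 4 → ℝ) : ℝ :=
  ∑ k, (Xf x k * pd (fun y => T y i j) k x
      - T x k j * pd (fun y => Xf y i) k x
      - T x i k * pd (fun y => Xf y j) k x)

/-- Lie derivative of a 2-form `ω` along a vector field `Xf`:
`(L_X ω)_{ij} = Σ_k ( X^k ∂ω_{ij}/∂x^k + ω_{kj} ∂X^k/∂x^i + ω_{ik} ∂X^k/∂x^j )`. -/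
def lieDerivForm (Xf : (Fin 4 → ℝ) → Fin 4 → ℝ)
    (ω : (Fin 4 → ℝ) → Matrix (Fin 4) (Fin 4) ℝ)
    (i j : Fin 4) (x : Fin 4 → ℝ) : ℝ :=
  ∑ k, (Xf x k * pd (fun y => ω y i j) k x
      + ω x k j * pd (fun y => Xf y k) i x
      + ω x i k * pd (fun y => Xf y k) j x)

/-- The Jacobiator of a bivector field `A`; `A` satisfies the Jacobi identity iff it
vanishes for all indices `i j k`. -/
def jac (A : (Fin 4 → ℝ) → Matrix (Fin 4) (Fin 4) ℝ)
    (i j k : Fin 4) (x : Fin 4 → ℝ) : ℝ :=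
  ∑ l, (A x l i * pd (fun y => A y j k) l x
      + A x l j * pd (fun y => A y k i) l x
      + A x l k * pd (fun y => A y i j) l x)

/-- The mixed Schouten bracket expression of two bivector fields `A` and `B`. -/
def mixedSchouten (A B : (Fin 4 → ℝ) → Matrix (Fin 4) (Fin 4) ℝ)
    (i j k : Fin 4) (x : Fin 4 → ℝ) : ℝ :=
  ∑ l, (A x l i * pd (fun y => B y j k) l x
      + A x l j * pd (fun y => B y k i) l x
      + A x l k * pd (fun y => B y i j) l x
      + B x l i * pd (fun y => A y j k) l x
      + B x l j * pd (fun y => A y k i) l x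
      + B x l k * pd (fun y => A y i j) l x)

/-- The weight-homogeneous potential `V = q₁^{4/α} f(q₂/q₁)` (real power, for `q₁ > 0`). -/
def Vw (α : ℝ) (f : ℝ → ℝ) (x : Fin 4 → ℝ) : ℝ := (x 0) ^ ((4 : ℝ) / α) * f (x 1 / x 0)

/-- The Hamiltonian `H = (p₁² + p₂²)/2 + V`. -/
def Hw (α : ℝ) (f : ℝ → ℝ) (x : Fin 4 → ℝ) : ℝ := ((x 2) ^ 2 + (x 3) ^ 2) / 2 + Vw α f x

/-- The Hamiltonian vector field `X = (p₁, p₂, −∂V/∂q₁, −∂V/∂q₂)`. -/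
def Xw (α : ℝ) (f : ℝ → ℝ) (x : Fin 4 → ℝ) : Fin 4 → ℝ :=
  ![x 2, x 3, -(pd (Vw α f) 0 x), -(pd (Vw α f) 1 x)]

/-- The invariant bivector `P̃` associated with the weight-homogeneous potential. -/
def Ptw (α : ℝ) (f : ℝ → ℝ) (x : Fin 4 → ℝ) : Matrix (Fin 4) (Fin 4) ℝ :=
  let q1 := x 0; let q2 := x 1; let p1 := x 2; let p2 := x 3
  let V1 := pd (Vw α f) 0 x
  let V2 := pd (Vw α f) 1 x
  let v := Vw α f x
  let e12 := α * (p1 * q2 - p2 * q1)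
  let e13 := p1 ^ 2 - p2 ^ 2 - α * q2 * V2 + 2 * v
  let e14 := 2 * p1 * p2 + α * q1 * V2
  let e23 := 2 * p1 * p2 + α * q2 * V1
  let e24 := -e13
  let e34 := 2 * p1 * V2 - 2 * p2 * V1
  !![0, e12, e13, e14;
     -(e12), 0, e23, e24;
     -(e13), -(e23), 0, e34;
     -(e14), -(e24), -(e34), 0]


def Gf (a : ℝ) (g : ℝ → ℝ) (x : Fin 4 → ℝ) : ℝ := x 0 ^ a * g (x 1 / x 0)
def Dg (a : ℝ) (g : ℝ → ℝ) : ℝ → ℝ := fun t => a * g t - t * deriv g t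

def grad4 (d : Fin 4 → ℝ) : (Fin 4 → ℝ) →L[ℝ] ℝ :=
  d 0 • ContinuousLinearMap.proj 0 + d 1 • ContinuousLinearMap.proj 1
  + d 2 • ContinuousLinearMap.proj 2 + d 3 • ContinuousLinearMap.proj 3

lemma grad4_apply (d : Fin 4 → ℝ) (w : Fin 4 → ℝ) :
    grad4 d w = d 0 * w 0 + d 1 * w 1 + d 2 * w 2 + d 3 * w 3 := by
  simp [grad4]

lemma pd_of_hasFDerivAt {F : (Fin 4 → ℝ) → ℝ} {d : Fin 4 → ℝ} {x : Fin 4 → ℝ}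
    (h : HasFDerivAt F (grad4 d) x) (k : Fin 4) : pd F k x = d k := by
  rw [pd, h.fderiv, grad4_apply]
  fin_cases k <;> simp [Pi.single_apply]

lemma hasFDerivAt_coord (i : Fin 4) (x : Fin 4 → ℝ) :
    HasFDerivAt (fun y : Fin 4 → ℝ => y i) (grad4 (fun k => if k = i then 1 else 0)) x := by
  have h := (ContinuousLinearMap.proj (R := ℝ) (φ := fun _ : Fin 4 => ℝ) i).hasFDerivAt (x := x)
  refine h.congr_fderiv ?_
  refine ContinuousLinearMap.ext fun w => ?_
  rw [grad4_apply]
  fin_cases i <;> simp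

lemma hasFDerivAt_Gf (a : ℝ) (g : ℝ → ℝ) (hg : ContDiff ℝ (⊤ : ℕ∞) g)
    {x : Fin 4 → ℝ} (hx : 0 < x 0) :
    HasFDerivAt (Gf a g)
      (grad4 ![Gf (a-1) (Dg a g) x, Gf (a-1) (deriv g) x, 0, 0]) x := by
  have hx0 : x 0 ≠ 0 := hx.ne'
  have h0 := hasFDerivAt_coord 0 x
  have h1 := hasFDerivAt_coord 1 x
  -- power part
  have hr : HasDerivAt (fun t : ℝ => t ^ a) (a * x 0 ^ (a - 1)) (x 0) :=
    Real.hasDerivAt_rpow_const (Or.inl hx0)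
  have hA : HasFDerivAt (fun y : Fin 4 → ℝ => y 0 ^ a)
      ((a * x 0 ^ (a - 1)) • grad4 (fun k => if k = 0 then 1 else 0)) x :=
    by have := hr.comp_hasFDerivAt x h0; exact this
  -- inverse part
  have hinv : HasFDerivAt (fun y : Fin 4 → ℝ => (y 0)⁻¹)
      ((-((x 0) ^ 2)⁻¹) • grad4 (fun k => if k = 0 then 1 else 0)) x :=
    (hasDerivAt_inv hx0).comp_hasFDerivAt x h0
  have hu : HasFDerivAt (fun y : Fin 4 → ℝ => y 1 * (y 0)⁻¹)
      ((x 1 : ℝ) • ((-((x 0) ^ 2)⁻¹) • grad4 (fun k => if k = 0 then 1 else 0))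
        + ((x 0)⁻¹ : ℝ) • grad4 (fun k => if k = 1 then 1 else 0)) x := h1.mul hinv
  have hgd : HasDerivAt g (deriv g (x 1 * (x 0)⁻¹)) (x 1 * (x 0)⁻¹) :=
    ((hg.differentiable (by simp)) (x 1 * (x 0)⁻¹)).hasDerivAt
  have hB : HasFDerivAt (fun y : Fin 4 → ℝ => g (y 1 * (y 0)⁻¹))
      ((deriv g (x 1 * (x 0)⁻¹)) • ((x 1 : ℝ) • ((-((x 0) ^ 2)⁻¹) • grad4 (fun k => if k = 0 then 1 else 0))
        + ((x 0)⁻¹ : ℝ) • grad4 (fun k => if k = 1 then 1 else 0))) x :=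
    hgd.comp_hasFDerivAt x hu
  have hAB := hA.mul hB
  have hfun : Gf a g = fun y : Fin 4 → ℝ => y 0 ^ a * g (y 1 * (y 0)⁻¹) := by
    funext y; simp [Gf, div_eq_mul_inv]
  rw [hfun]
  refine hAB.congr_fderiv ?_
  refine ContinuousLinearMap.ext fun w => ?_
  have e1 : x 0 ^ a = x 0 ^ (a - 1) * x 0 := by
    rw [show a = (a - 1) + 1 by ring, Real.rpow_add_one hx0]; ring_nf
  simp only [ContinuousLinearMap.add_apply, ContinuousLinearMap.smul_apply,
    ContinuousLinearMap.proj_apply, smul_eq_mul, grad4_apply]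
  simp only [Gf, Dg, div_eq_mul_inv, Matrix.cons_val_zero, Matrix.cons_val_one, Matrix.head_cons,
    Matrix.cons_val_two, Matrix.tail_cons, Matrix.cons_val_three]
  simp only [Fin.reduceEq, reduceIte]
  rw [e1]
  field_simp
  ring

lemma contDiff_deriv' {f : ℝ → ℝ} (hf : ContDiff ℝ (⊤ : ℕ∞) f) :
    ContDiff ℝ (⊤ : ℕ∞) (deriv f) := (contDiff_infty_iff_deriv.mp hf).2

lemma contDiff_Dg {f : ℝ → ℝ} (a : ℝ) (hf : ContDiff ℝ (⊤ : ℕ∞) f) :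
    ContDiff ℝ (⊤ : ℕ∞) (Dg a f) := by
  unfold Dg
  exact (contDiff_const.mul hf).sub (contDiff_id.mul (contDiff_deriv' hf))

lemma deriv_Dg {f : ℝ → ℝ} (a : ℝ) (hf : ContDiff ℝ (⊤ : ℕ∞) f) (t : ℝ) :
    deriv (Dg a f) t = (a - 1) * deriv f t - t * deriv (deriv f) t := by
  have h1 : HasDerivAt (Dg a f)
      (a * deriv f t - (1 * deriv f t + t * deriv (deriv f) t)) t := by
    unfold Dg
    exact (((hf.differentiable (by simp)) t).hasDerivAt.const_mul a).sub
      ((hasDerivAt_id t).mul (((contDiff_deriv' hf).differentiable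
        (by simp)) t).hasDerivAt)
  rw [h1.deriv]; ring

def W1 (α : ℝ) (f : ℝ → ℝ) : (Fin 4 → ℝ) → ℝ := Gf (4/α - 1) (Dg (4/α) f)
def W2 (α : ℝ) (f : ℝ → ℝ) : (Fin 4 → ℝ) → ℝ := Gf (4/α - 1) (deriv f)

def q12 (α : ℝ) (f : ℝ → ℝ) (y : Fin 4 → ℝ) : ℝ := α * (y 2 * y 1 - y 3 * y 0)
def q13 (α : ℝ) (f : ℝ → ℝ) (y : Fin 4 → ℝ) : ℝ :=
  y 2 ^ 2 - y 3 ^ 2 - α * y 1 * W2 α f y + 2 * Gf (4/α) f y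
def q14 (α : ℝ) (f : ℝ → ℝ) (y : Fin 4 → ℝ) : ℝ := 2 * y 2 * y 3 + α * y 0 * W2 α f y
def q23 (α : ℝ) (f : ℝ → ℝ) (y : Fin 4 → ℝ) : ℝ := 2 * y 2 * y 3 + α * y 1 * W1 α f y
def q34 (α : ℝ) (f : ℝ → ℝ) (y : Fin 4 → ℝ) : ℝ := 2 * y 2 * W2 α f y - 2 * y 3 * W1 α f y

def Qm (α : ℝ) (f : ℝ → ℝ) (y : Fin 4 → ℝ) : Matrix (Fin 4) (Fin 4) ℝ :=
  !![0, q12 α f y, q13 α f y, q14 α f y;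
     -(q12 α f y), 0, q23 α f y, -(q13 α f y);
     -(q13 α f y), -(q23 α f y), 0, q34 α f y;
     -(q14 α f y), -(-(q13 α f y)), -(q34 α f y), 0]

def Yv (α : ℝ) (f : ℝ → ℝ) (y : Fin 4 → ℝ) : Fin 4 → ℝ :=
  ![y 2, y 3, -(W1 α f y), -(W2 α f y)]

lemma pd_congr {F G : (Fin 4 → ℝ) → ℝ} {x : Fin 4 → ℝ} (h : F =ᶠ[nhds x] G) (k : Fin 4) :
    pd F k x = pd G k x := by
  unfold pd; rw [h.fderiv_eq]

lemma Qm_antisymm (α : ℝ) (f : ℝ → ℝ) (y : Fin 4 → ℝ) (i j : Fin 4) :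
    Qm α f y j i = -(Qm α f y i j) := by
  fin_cases i <;> fin_cases j <;> simp [Qm]

lemma lie_anti (Xf : (Fin 4 → ℝ) → Fin 4 → ℝ) (T : (Fin 4 → ℝ) → Matrix (Fin 4) (Fin 4) ℝ)
    (hT : ∀ y i j, T y j i = -(T y i j)) (i j : Fin 4) (x : Fin 4 → ℝ) :
    lieDerivBiv Xf T j i x = -(lieDerivBiv Xf T i j x) := by
  unfold lieDerivBiv
  rw [← Finset.sum_neg_distrib]
  refine Finset.sum_congr rfl fun k _ => ?_
  have h1 : (fun y => T y j i) = fun y => -(T y i j) := funext fun y => hT y i j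
  have h2 : pd (fun y => T y j i) k x = -(pd (fun y => T y i j) k x) := by
    rw [h1]; unfold pd; rw [fderiv_fun_neg]; simp
  rw [h2, hT x k i, hT x j k]
  ring

def W11 (α : ℝ) (f : ℝ → ℝ) : (Fin 4 → ℝ) → ℝ := Gf (4/α - 1 - 1) (Dg (4/α - 1) (Dg (4/α) f))
def W12 (α : ℝ) (f : ℝ → ℝ) : (Fin 4 → ℝ) → ℝ := Gf (4/α - 1 - 1) (deriv (Dg (4/α) f))
def W21 (α : ℝ) (f : ℝ → ℝ) : (Fin 4 → ℝ) → ℝ := Gf (4/α - 1 - 1) (Dg (4/α - 1) (deriv f))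
def W22 (α : ℝ) (f : ℝ → ℝ) : (Fin 4 → ℝ) → ℝ := Gf (4/α - 1 - 1) (deriv (deriv f))

section entries

variable {f : ℝ → ℝ} {x : Fin 4 → ℝ}

lemma hasW1 (α : ℝ) (hf : ContDiff ℝ (⊤ : ℕ∞) f) (hx : 0 < x 0) :
    HasFDerivAt (W1 α f) (grad4 ![W11 α f x, W12 α f x, 0, 0]) x :=
  hasFDerivAt_Gf (4/α - 1) (Dg (4/α) f) (contDiff_Dg _ hf) hx

lemma hasW2 (α : ℝ) (hf : ContDiff ℝ (⊤ : ℕ∞) f) (hx : 0 < x 0) :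
    HasFDerivAt (W2 α f) (grad4 ![W21 α f x, W22 α f x, 0, 0]) x :=
  hasFDerivAt_Gf (4/α - 1) (deriv f) (contDiff_deriv' hf) hx

lemma hasGfV (α : ℝ) (hf : ContDiff ℝ (⊤ : ℕ∞) f) (hx : 0 < x 0) :
    HasFDerivAt (Gf (4/α) f) (grad4 ![W1 α f x, W2 α f x, 0, 0]) x :=
  hasFDerivAt_Gf (4/α) f hf hx

lemma hasW1neg (α : ℝ) (hf : ContDiff ℝ (⊤ : ℕ∞) f) (hx : 0 < x 0) :
    HasFDerivAt (fun y => -(W1 α f y)) (grad4 ![-(W11 α f x), -(W12 α f x), 0, 0]) x := by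
  refine (hasW1 α hf hx).neg.congr_fderiv (ContinuousLinearMap.ext fun w => ?_)
  simp [grad4_apply]; ring

lemma hasW2neg (α : ℝ) (hf : ContDiff ℝ (⊤ : ℕ∞) f) (hx : 0 < x 0) :
    HasFDerivAt (fun y => -(W2 α f y)) (grad4 ![-(W21 α f x), -(W22 α f x), 0, 0]) x := by
  refine (hasW2 α hf hx).neg.congr_fderiv (ContinuousLinearMap.ext fun w => ?_)
  simp [grad4_apply]; ring

lemma has_q12 (α : ℝ) : HasFDerivAt (q12 α f)
    (grad4 ![-(α * x 3), α * x 2, α * x 1, -(α * x 0)]) x := by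
  have h := (((hasFDerivAt_coord 2 x).mul (hasFDerivAt_coord 1 x)).sub
    ((hasFDerivAt_coord 3 x).mul (hasFDerivAt_coord 0 x))).const_mul α
  have hq : q12 α f = fun y => α * (y 2 * y 1 - y 3 * y 0) := rfl
  rw [hq]
  refine h.congr_fderiv (ContinuousLinearMap.ext fun w => ?_)
  simp [grad4_apply]; ring

lemma has_q13 (α : ℝ) (hf : ContDiff ℝ (⊤ : ℕ∞) f) (hx : 0 < x 0) : HasFDerivAt (q13 α f)
    (grad4 ![-(α * x 1 * W21 α f x) + 2 * W1 α f x,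
             -(α * W2 α f x) - α * x 1 * W22 α f x + 2 * W2 α f x,
             2 * x 2, -(2 * x 3)]) x := by
  have hq : q13 α f = fun y => (y 2 * y 2 - y 3 * y 3 - α * y 1 * W2 α f y + 2 * Gf (4/α) f y) := by
    funext y; unfold q13; ring
  rw [hq]
  have h := ((((hasFDerivAt_coord 2 x).mul (hasFDerivAt_coord 2 x)).sub
      ((hasFDerivAt_coord 3 x).mul (hasFDerivAt_coord 3 x))).sub
      (((hasFDerivAt_coord 1 x).const_mul α).mul (hasW2 α hf hx))).add
      ((hasGfV α hf hx).const_mul 2)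
  refine h.congr_fderiv (ContinuousLinearMap.ext fun w => ?_)
  simp [grad4_apply]; ring

lemma has_q14 (α : ℝ) (hf : ContDiff ℝ (⊤ : ℕ∞) f) (hx : 0 < x 0) : HasFDerivAt (q14 α f)
    (grad4 ![α * W2 α f x + α * x 0 * W21 α f x, α * x 0 * W22 α f x, 2 * x 3, 2 * x 2]) x := by
  have h := (((hasFDerivAt_coord 2 x).const_mul 2).mul (hasFDerivAt_coord 3 x)).add
      (((hasFDerivAt_coord 0 x).const_mul α).mul (hasW2 α hf hx))
  refine h.congr_fderiv (ContinuousLinearMap.ext fun w => ?_)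
  simp [grad4_apply]; ring

lemma has_q23 (α : ℝ) (hf : ContDiff ℝ (⊤ : ℕ∞) f) (hx : 0 < x 0) : HasFDerivAt (q23 α f)
    (grad4 ![α * x 1 * W11 α f x, α * W1 α f x + α * x 1 * W12 α f x, 2 * x 3, 2 * x 2]) x := by
  have h := (((hasFDerivAt_coord 2 x).const_mul 2).mul (hasFDerivAt_coord 3 x)).add
      (((hasFDerivAt_coord 1 x).const_mul α).mul (hasW1 α hf hx))
  refine h.congr_fderiv (ContinuousLinearMap.ext fun w => ?_)
  simp [grad4_apply]; ring

lemma has_q34 (α : ℝ) (hf : ContDiff ℝ (⊤ : ℕ∞) f) (hx : 0 < x 0) : HasFDerivAt (q34 α f)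
    (grad4 ![2 * x 2 * W21 α f x - 2 * x 3 * W11 α f x,
             2 * x 2 * W22 α f x - 2 * x 3 * W12 α f x,
             2 * W2 α f x, -(2 * W1 α f x)]) x := by
  have h := ((((hasFDerivAt_coord 2 x).const_mul 2).mul (hasW2 α hf hx)).sub
      (((hasFDerivAt_coord 3 x).const_mul 2).mul (hasW1 α hf hx)))
  refine h.congr_fderiv (ContinuousLinearMap.ext fun w => ?_)
  simp [grad4_apply]; ring

end entries

lemma has_q13neg {f : ℝ → ℝ} {x : Fin 4 → ℝ} (α : ℝ) (hf : ContDiff ℝ (⊤ : ℕ∞) f)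
    (hx : 0 < x 0) : HasFDerivAt (fun y => -(q13 α f y))
    (grad4 ![-(-(α * x 1 * W21 α f x) + 2 * W1 α f x),
             -(-(α * W2 α f x) - α * x 1 * W22 α f x + 2 * W2 α f x),
             -(2 * x 2), -(-(2 * x 3))]) x := by
  refine (has_q13 α hf hx).neg.congr_fderiv (ContinuousLinearMap.ext fun w => ?_)
  simp [grad4_apply]; ring
lemma key01 (α : ℝ) (f : ℝ → ℝ) (x : Fin 4 → ℝ) (hα : α ≠ 0) (hf : ContDiff ℝ (⊤ : ℕ∞) f)
    (hx : 0 < x 0) : lieDerivBiv (Yv α f) (Qm α f) 0 1 x = 0 := by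
  have p0 : x 0 ^ ((4:ℝ)/α) = x 0 ^ ((4:ℝ)/α - 1 - 1) * x 0 * x 0 := by
    rw [show (4:ℝ)/α = ((4:ℝ)/α - 1 - 1) + 1 + 1 by ring, Real.rpow_add_one hx.ne',
      Real.rpow_add_one hx.ne']
    ring_nf
  have p1 : x 0 ^ ((4:ℝ)/α - 1) = x 0 ^ ((4:ℝ)/α - 1 - 1) * x 0 := by
    rw [show (4:ℝ)/α - 1 = ((4:ℝ)/α - 1 - 1) + 1 by ring, Real.rpow_add_one hx.ne']
    ring_nf
  unfold lieDerivBiv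
  rw [Fin.sum_univ_four]
  simp only [Qm, Yv, Matrix.cons_val', Matrix.cons_val_zero, Matrix.cons_val_one,
    Matrix.head_cons, Matrix.empty_val', Matrix.cons_val_fin_one, Matrix.head_fin_const,
    Matrix.cons_val_two, Matrix.tail_cons, Matrix.cons_val_three, Matrix.of_apply]
  simp only [pd_of_hasFDerivAt (has_q12 α), pd_of_hasFDerivAt (has_q13 α hf hx), pd_of_hasFDerivAt (has_q13neg α hf hx),
    pd_of_hasFDerivAt (has_q14 α hf hx), pd_of_hasFDerivAt (has_q23 α hf hx),
    pd_of_hasFDerivAt (has_q34 α hf hx), pd_of_hasFDerivAt (hasW1neg α hf hx),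
    pd_of_hasFDerivAt (hasW2neg α hf hx), pd_of_hasFDerivAt (hasFDerivAt_coord 0 x),
    pd_of_hasFDerivAt (hasFDerivAt_coord 1 x), pd_of_hasFDerivAt (hasFDerivAt_coord 2 x),
    pd_of_hasFDerivAt (hasFDerivAt_coord 3 x)]
  simp only [Matrix.cons_val_zero, Matrix.cons_val_one, Matrix.head_cons,
    Matrix.cons_val_two, Matrix.tail_cons, Matrix.cons_val_three, Fin.reduceEq, reduceIte]
  simp only [q12, q13, q14, q23, q34, W1, W2, W11, W12, W21, W22, Gf, Dg]
  try simp only [deriv_Dg (4/α) hf]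
  first
  | (rw [p0, p1]; field_simp; ring)
  | (field_simp; ring)
  | ring

lemma key02 (α : ℝ) (f : ℝ → ℝ) (x : Fin 4 → ℝ) (hα : α ≠ 0) (hf : ContDiff ℝ (⊤ : ℕ∞) f)
    (hx : 0 < x 0) : lieDerivBiv (Yv α f) (Qm α f) 0 2 x = 0 := by
  have p0 : x 0 ^ ((4:ℝ)/α) = x 0 ^ ((4:ℝ)/α - 1 - 1) * x 0 * x 0 := by
    rw [show (4:ℝ)/α = ((4:ℝ)/α - 1 - 1) + 1 + 1 by ring, Real.rpow_add_one hx.ne',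
      Real.rpow_add_one hx.ne']
    ring_nf
  have p1 : x 0 ^ ((4:ℝ)/α - 1) = x 0 ^ ((4:ℝ)/α - 1 - 1) * x 0 := by
    rw [show (4:ℝ)/α - 1 = ((4:ℝ)/α - 1 - 1) + 1 by ring, Real.rpow_add_one hx.ne']
    ring_nf
  unfold lieDerivBiv
  rw [Fin.sum_univ_four]
  simp only [Qm, Yv, Matrix.cons_val', Matrix.cons_val_zero, Matrix.cons_val_one,
    Matrix.head_cons, Matrix.empty_val', Matrix.cons_val_fin_one, Matrix.head_fin_const,
    Matrix.cons_val_two, Matrix.tail_cons, Matrix.cons_val_three, Matrix.of_apply]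
  simp only [pd_of_hasFDerivAt (has_q12 α), pd_of_hasFDerivAt (has_q13 α hf hx), pd_of_hasFDerivAt (has_q13neg α hf hx),
    pd_of_hasFDerivAt (has_q14 α hf hx), pd_of_hasFDerivAt (has_q23 α hf hx),
    pd_of_hasFDerivAt (has_q34 α hf hx), pd_of_hasFDerivAt (hasW1neg α hf hx),
    pd_of_hasFDerivAt (hasW2neg α hf hx), pd_of_hasFDerivAt (hasFDerivAt_coord 0 x),
    pd_of_hasFDerivAt (hasFDerivAt_coord 1 x), pd_of_hasFDerivAt (hasFDerivAt_coord 2 x),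
    pd_of_hasFDerivAt (hasFDerivAt_coord 3 x)]
  simp only [Matrix.cons_val_zero, Matrix.cons_val_one, Matrix.head_cons,
    Matrix.cons_val_two, Matrix.tail_cons, Matrix.cons_val_three, Fin.reduceEq, reduceIte]
  simp only [q12, q13, q14, q23, q34, W1, W2, W11, W12, W21, W22, Gf, Dg]
  try simp only [deriv_Dg (4/α) hf]
  first
  | (rw [p0, p1]; field_simp; ring)
  | (field_simp; ring)
  | ring

lemma key03 (α : ℝ) (f : ℝ → ℝ) (x : Fin 4 → ℝ) (hα : α ≠ 0) (hf : ContDiff ℝ (⊤ : ℕ∞) f)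
    (hx : 0 < x 0) : lieDerivBiv (Yv α f) (Qm α f) 0 3 x = 0 := by
  have p0 : x 0 ^ ((4:ℝ)/α) = x 0 ^ ((4:ℝ)/α - 1 - 1) * x 0 * x 0 := by
    rw [show (4:ℝ)/α = ((4:ℝ)/α - 1 - 1) + 1 + 1 by ring, Real.rpow_add_one hx.ne',
      Real.rpow_add_one hx.ne']
    ring_nf
  have p1 : x 0 ^ ((4:ℝ)/α - 1) = x 0 ^ ((4:ℝ)/α - 1 - 1) * x 0 := by
    rw [show (4:ℝ)/α - 1 = ((4:ℝ)/α - 1 - 1) + 1 by ring, Real.rpow_add_one hx.ne']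
    ring_nf
  unfold lieDerivBiv
  rw [Fin.sum_univ_four]
  simp only [Qm, Yv, Matrix.cons_val', Matrix.cons_val_zero, Matrix.cons_val_one,
    Matrix.head_cons, Matrix.empty_val', Matrix.cons_val_fin_one, Matrix.head_fin_const,
    Matrix.cons_val_two, Matrix.tail_cons, Matrix.cons_val_three, Matrix.of_apply]
  simp only [pd_of_hasFDerivAt (has_q12 α), pd_of_hasFDerivAt (has_q13 α hf hx), pd_of_hasFDerivAt (has_q13neg α hf hx),
    pd_of_hasFDerivAt (has_q14 α hf hx), pd_of_hasFDerivAt (has_q23 α hf hx),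
    pd_of_hasFDerivAt (has_q34 α hf hx), pd_of_hasFDerivAt (hasW1neg α hf hx),
    pd_of_hasFDerivAt (hasW2neg α hf hx), pd_of_hasFDerivAt (hasFDerivAt_coord 0 x),
    pd_of_hasFDerivAt (hasFDerivAt_coord 1 x), pd_of_hasFDerivAt (hasFDerivAt_coord 2 x),
    pd_of_hasFDerivAt (hasFDerivAt_coord 3 x)]
  simp only [Matrix.cons_val_zero, Matrix.cons_val_one, Matrix.head_cons,
    Matrix.cons_val_two, Matrix.tail_cons, Matrix.cons_val_three, Fin.reduceEq, reduceIte]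
  simp only [q12, q13, q14, q23, q34, W1, W2, W11, W12, W21, W22, Gf, Dg]
  try simp only [deriv_Dg (4/α) hf]
  first
  | (rw [p0, p1]; field_simp; ring)
  | (field_simp; ring)
  | ring

lemma key12 (α : ℝ) (f : ℝ → ℝ) (x : Fin 4 → ℝ) (hα : α ≠ 0) (hf : ContDiff ℝ (⊤ : ℕ∞) f)
    (hx : 0 < x 0) : lieDerivBiv (Yv α f) (Qm α f) 1 2 x = 0 := by
  have p0 : x 0 ^ ((4:ℝ)/α) = x 0 ^ ((4:ℝ)/α - 1 - 1) * x 0 * x 0 := by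
    rw [show (4:ℝ)/α = ((4:ℝ)/α - 1 - 1) + 1 + 1 by ring, Real.rpow_add_one hx.ne',
      Real.rpow_add_one hx.ne']
    ring_nf
  have p1 : x 0 ^ ((4:ℝ)/α - 1) = x 0 ^ ((4:ℝ)/α - 1 - 1) * x 0 := by
    rw [show (4:ℝ)/α - 1 = ((4:ℝ)/α - 1 - 1) + 1 by ring, Real.rpow_add_one hx.ne']
    ring_nf
  unfold lieDerivBiv
  rw [Fin.sum_univ_four]
  simp only [Qm, Yv, Matrix.cons_val', Matrix.cons_val_zero, Matrix.cons_val_one,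
    Matrix.head_cons, Matrix.empty_val', Matrix.cons_val_fin_one, Matrix.head_fin_const,
    Matrix.cons_val_two, Matrix.tail_cons, Matrix.cons_val_three, Matrix.of_apply]
  simp only [pd_of_hasFDerivAt (has_q12 α), pd_of_hasFDerivAt (has_q13 α hf hx), pd_of_hasFDerivAt (has_q13neg α hf hx),
    pd_of_hasFDerivAt (has_q14 α hf hx), pd_of_hasFDerivAt (has_q23 α hf hx),
    pd_of_hasFDerivAt (has_q34 α hf hx), pd_of_hasFDerivAt (hasW1neg α hf hx),
    pd_of_hasFDerivAt (hasW2neg α hf hx), pd_of_hasFDerivAt (hasFDerivAt_coord 0 x),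
    pd_of_hasFDerivAt (hasFDerivAt_coord 1 x), pd_of_hasFDerivAt (hasFDerivAt_coord 2 x),
    pd_of_hasFDerivAt (hasFDerivAt_coord 3 x)]
  simp only [Matrix.cons_val_zero, Matrix.cons_val_one, Matrix.head_cons,
    Matrix.cons_val_two, Matrix.tail_cons, Matrix.cons_val_three, Fin.reduceEq, reduceIte]
  simp only [q12, q13, q14, q23, q34, W1, W2, W11, W12, W21, W22, Gf, Dg]
  try simp only [deriv_Dg (4/α) hf]
  first
  | (rw [p0, p1]; field_simp; ring)
  | (field_simp; ring)
  | ring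

lemma key13 (α : ℝ) (f : ℝ → ℝ) (x : Fin 4 → ℝ) (hα : α ≠ 0) (hf : ContDiff ℝ (⊤ : ℕ∞) f)
    (hx : 0 < x 0) : lieDerivBiv (Yv α f) (Qm α f) 1 3 x = 0 := by
  have p0 : x 0 ^ ((4:ℝ)/α) = x 0 ^ ((4:ℝ)/α - 1 - 1) * x 0 * x 0 := by
    rw [show (4:ℝ)/α = ((4:ℝ)/α - 1 - 1) + 1 + 1 by ring, Real.rpow_add_one hx.ne',
      Real.rpow_add_one hx.ne']
    ring_nf
  have p1 : x 0 ^ ((4:ℝ)/α - 1) = x 0 ^ ((4:ℝ)/α - 1 - 1) * x 0 := by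
    rw [show (4:ℝ)/α - 1 = ((4:ℝ)/α - 1 - 1) + 1 by ring, Real.rpow_add_one hx.ne']
    ring_nf
  unfold lieDerivBiv
  rw [Fin.sum_univ_four]
  simp only [Qm, Yv, Matrix.cons_val', Matrix.cons_val_zero, Matrix.cons_val_one,
    Matrix.head_cons, Matrix.empty_val', Matrix.cons_val_fin_one, Matrix.head_fin_const,
    Matrix.cons_val_two, Matrix.tail_cons, Matrix.cons_val_three, Matrix.of_apply]
  simp only [pd_of_hasFDerivAt (has_q12 α), pd_of_hasFDerivAt (has_q13 α hf hx), pd_of_hasFDerivAt (has_q13neg α hf hx),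
    pd_of_hasFDerivAt (has_q14 α hf hx), pd_of_hasFDerivAt (has_q23 α hf hx),
    pd_of_hasFDerivAt (has_q34 α hf hx), pd_of_hasFDerivAt (hasW1neg α hf hx),
    pd_of_hasFDerivAt (hasW2neg α hf hx), pd_of_hasFDerivAt (hasFDerivAt_coord 0 x),
    pd_of_hasFDerivAt (hasFDerivAt_coord 1 x), pd_of_hasFDerivAt (hasFDerivAt_coord 2 x),
    pd_of_hasFDerivAt (hasFDerivAt_coord 3 x)]
  simp only [Matrix.cons_val_zero, Matrix.cons_val_one, Matrix.head_cons,
    Matrix.cons_val_two, Matrix.tail_cons, Matrix.cons_val_three, Fin.reduceEq, reduceIte]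
  simp only [q12, q13, q14, q23, q34, W1, W2, W11, W12, W21, W22, Gf, Dg]
  try simp only [deriv_Dg (4/α) hf]
  first
  | (rw [p0, p1]; field_simp; ring)
  | (field_simp; ring)
  | ring

lemma key23 (α : ℝ) (f : ℝ → ℝ) (x : Fin 4 → ℝ) (hα : α ≠ 0) (hf : ContDiff ℝ (⊤ : ℕ∞) f)
    (hx : 0 < x 0) : lieDerivBiv (Yv α f) (Qm α f) 2 3 x = 0 := by
  have p0 : x 0 ^ ((4:ℝ)/α) = x 0 ^ ((4:ℝ)/α - 1 - 1) * x 0 * x 0 := by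
    rw [show (4:ℝ)/α = ((4:ℝ)/α - 1 - 1) + 1 + 1 by ring, Real.rpow_add_one hx.ne',
      Real.rpow_add_one hx.ne']
    ring_nf
  have p1 : x 0 ^ ((4:ℝ)/α - 1) = x 0 ^ ((4:ℝ)/α - 1 - 1) * x 0 := by
    rw [show (4:ℝ)/α - 1 = ((4:ℝ)/α - 1 - 1) + 1 by ring, Real.rpow_add_one hx.ne']
    ring_nf
  unfold lieDerivBiv
  rw [Fin.sum_univ_four]
  simp only [Qm, Yv, Matrix.cons_val', Matrix.cons_val_zero, Matrix.cons_val_one,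
    Matrix.head_cons, Matrix.empty_val', Matrix.cons_val_fin_one, Matrix.head_fin_const,
    Matrix.cons_val_two, Matrix.tail_cons, Matrix.cons_val_three, Matrix.of_apply]
  simp only [pd_of_hasFDerivAt (has_q12 α), pd_of_hasFDerivAt (has_q13 α hf hx), pd_of_hasFDerivAt (has_q13neg α hf hx),
    pd_of_hasFDerivAt (has_q14 α hf hx), pd_of_hasFDerivAt (has_q23 α hf hx),
    pd_of_hasFDerivAt (has_q34 α hf hx), pd_of_hasFDerivAt (hasW1neg α hf hx),
    pd_of_hasFDerivAt (hasW2neg α hf hx), pd_of_hasFDerivAt (hasFDerivAt_coord 0 x),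
    pd_of_hasFDerivAt (hasFDerivAt_coord 1 x), pd_of_hasFDerivAt (hasFDerivAt_coord 2 x),
    pd_of_hasFDerivAt (hasFDerivAt_coord 3 x)]
  simp only [Matrix.cons_val_zero, Matrix.cons_val_one, Matrix.head_cons,
    Matrix.cons_val_two, Matrix.tail_cons, Matrix.cons_val_three, Fin.reduceEq, reduceIte]
  simp only [q12, q13, q14, q23, q34, W1, W2, W11, W12, W21, W22, Gf, Dg]
  try simp only [deriv_Dg (4/α) hf]
  first
  | (rw [p0, p1]; field_simp; ring)
  | (field_simp; ring)
  | ring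

lemma keyAll (α : ℝ) (f : ℝ → ℝ) (x : Fin 4 → ℝ) (hα : α ≠ 0) (hf : ContDiff ℝ (⊤ : ℕ∞) f)
    (hx : 0 < x 0) (i j : Fin 4) : lieDerivBiv (Yv α f) (Qm α f) i j x = 0 := by
  have anti := lie_anti (Yv α f) (Qm α f) (fun y i j => Qm_antisymm α f y i j)
  fin_cases i <;> fin_cases j
  · have h := anti 0 0 x
    have h2 : lieDerivBiv (Yv α f) (Qm α f) 0 0 x = 0 := by linarith
    exact h2
  · exact key01 α f x hα hf hx
  · exact key02 α f x hα hf hx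
  · exact key03 α f x hα hf hx
  · have h := anti 0 1 x
    rw [key01 α f x hα hf hx] at h
    simpa using h
  · have h := anti 1 1 x
    have h2 : lieDerivBiv (Yv α f) (Qm α f) 1 1 x = 0 := by linarith
    exact h2
  · exact key12 α f x hα hf hx
  · exact key13 α f x hα hf hx
  · have h := anti 0 2 x
    rw [key02 α f x hα hf hx] at h
    simpa using h
  · have h := anti 1 2 x
    rw [key12 α f x hα hf hx] at h
    simpa using h
  · have h := anti 2 2 x
    have h2 : lieDerivBiv (Yv α f) (Qm α f) 2 2 x = 0 := by linarith
    exact h2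
  · exact key23 α f x hα hf hx
  · have h := anti 0 3 x
    rw [key03 α f x hα hf hx] at h
    simpa using h
  · have h := anti 1 3 x
    rw [key13 α f x hα hf hx] at h
    simpa using h
  · have h := anti 2 3 x
    rw [key23 α f x hα hf hx] at h
    simpa using h
  · have h := anti 3 3 x
    have h2 : lieDerivBiv (Yv α f) (Qm α f) 3 3 x = 0 := by linarith
    exact h2


/-- for `V = q₁^{4/α} f(q₂/q₁)`, the Hamiltonian flow preserves `P̃`:
`L_X P̃ = 0` on the open set `{q₁ > 0}`. -/
theorem statement6 (α : ℝ) (hα : α ≠ 0) (f : ℝ → ℝ) (hf : ContDiff ℝ (⊤ : ℕ∞) f) :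
    ∀ x : Fin 4 → ℝ, 0 < x 0 →
      ∀ i j : Fin 4, lieDerivBiv (Xw α f) (Ptw α f) i j x = 0 := by
  intro x hx i j
  have hf' : ContDiff ℝ (⊤ : ℕ∞) f := hf.of_le (by simp)
  have hopen : IsOpen {y : Fin 4 → ℝ | 0 < y 0} :=
    isOpen_lt continuous_const (continuous_apply 0)
  have hmem : {y : Fin 4 → ℝ | 0 < y 0} ∈ nhds x := hopen.mem_nhds hx
  have hX : ∀ y : Fin 4 → ℝ, 0 < y 0 → Xw α f y = Yv α f y := by
    intro y hy
    have h0 : pd (Vw α f) 0 y = W1 α f y := by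
      exact pd_of_hasFDerivAt (hasGfV α hf' hy) 0
    have h1 : pd (Vw α f) 1 y = W2 α f y := by
      exact pd_of_hasFDerivAt (hasGfV α hf' hy) 1
    unfold Xw Yv
    rw [h0, h1]
  have hT : ∀ y : Fin 4 → ℝ, 0 < y 0 → Ptw α f y = Qm α f y := by
    intro y hy
    have h0 : pd (Vw α f) 0 y = W1 α f y := by
      exact pd_of_hasFDerivAt (hasGfV α hf' hy) 0
    have h1 : pd (Vw α f) 1 y = W2 α f y := by
      exact pd_of_hasFDerivAt (hasGfV α hf' hy) 1
    have hV : Vw α f y = Gf (4/α) f y := rfl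
    simp only [Ptw, Qm, q12, q13, q14, q23, q34]
    rw [h0, h1, hV]
  have hTs : ∀ i' j' : Fin 4,
      (fun y => Ptw α f y i' j') =ᶠ[nhds x] (fun y => Qm α f y i' j') :=
    fun i' j' => Filter.eventuallyEq_of_mem hmem (fun y hy => by simp only [hT y hy])
  have hXs : ∀ i' : Fin 4,
      (fun y => Xw α f y i') =ᶠ[nhds x] (fun y => Yv α f y i') :=
    fun i' => Filter.eventuallyEq_of_mem hmem (fun y hy => by simp only [hX y hy])
  have heq : lieDerivBiv (Xw α f) (Ptw α f) i j x = lieDerivBiv (Yv α f) (Qm α f) i j x := by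
    unfold lieDerivBiv
    refine Finset.sum_congr rfl fun k _ => ?_
    rw [pd_congr (hTs i j) k, pd_congr (hXs i) k, pd_congr (hXs j) k, hT x hx, hX x hx]
  rw [heq]
  exact keyAll α f x hα hf' hx i j

end
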